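/- arXiv:1602.04355 — 2 statements merged into one kernel-verified Lean document; each statement's English description precedes it below -/
import Mathlib

section
/- Let f and g be continuous, strictly increasing bijections of ℝ satisfying f(x+1) = f(x)+1 and g(x+1) = g(x)+1 for all x ∈ ℝ (i.e., lifts of orientation-preserving circle homeomorphisms). Assume that f(x) < g(x) for every x ∈ ℝ, and assume that there exist NO natural number m ≥ 1, integer n, and points x₀, y₀ ∈ ℝ such that f^[m](x₀) = x₀ + n and g^[m](y₀) = y₀ + n (where f^[m] denotes the m-th iterate). Then the translation numbers of f and g are different: τ(f) ≠ τ(g). -/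
/-!
By compactness of the circle, `g - f` is bounded below by some `δ > 0`, and the gap survives
iteration: `f^k + δ ≤ g^k`. Two lifts separated by `δ` that share a translation number `β`
keep `β` at distance at least `δ` from every integer `j ≠ β`: on the side of `j` where `β`
lies, one lift moves every point strictly past `x + j`, and the other then moves every point
at least `δ` further. If `τ f = τ g = τ`, Dirichlet's theorem gives `k ≥ 1` with `k τ` within
`δ` of an integer `j`, hence `k τ = j`, and the continuous lifts `f^k`, `g^k` both realise
the rotation `j` at some point, which is excluded.
-/

namespace CircleDeg1Lift

theorem exists_pos_forall_add_le_of_forall_lt {f g : CircleDeg1Lift} (hf : Continuous f)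
    (hg : Continuous g) (hlt : ∀ x, f x < g x) : ∃ δ > 0, ∀ x, f x + δ ≤ g x := by
  have hper : Function.Periodic (fun x => g x - f x) 1 := fun x => by
    simp only [map_add_one]; ring
  obtain ⟨δ, ⟨x₀, rfl⟩, hmin⟩ :=
    (hper.compact_of_continuous one_ne_zero (hg.sub hf)).exists_isLeast (Set.range_nonempty _)
  exact ⟨g x₀ - f x₀, sub_pos.2 (hlt x₀), fun x => by linarith [hmin ⟨x, rfl⟩]⟩

theorem pow_add_le_pow_of_forall_add_le {f g : CircleDeg1Lift} {δ : ℝ}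
    (h : ∀ x, f x + δ ≤ g x) (hδ : 0 ≤ δ) {k : ℕ} (hk : k ≠ 0) (x : ℝ) :
    (f ^ k) x + δ ≤ (g ^ k) x := by
  obtain ⟨k, rfl⟩ := Nat.exists_eq_succ_of_ne_zero hk
  have hle : f ≤ g := fun y => by linarith [h y]
  rw [coe_pow, coe_pow, Function.iterate_succ_apply', Function.iterate_succ_apply']
  exact (h _).trans (g.monotone (iterate_mono hle k x))

theorem le_abs_translationNumber_sub_int_of_forall_add_le {f g : CircleDeg1Lift} {δ : ℝ}
    (h : ∀ x, f x + δ ≤ g x) (hτ : f.translationNumber = g.translationNumber) {j : ℤ}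
    (hj : f.translationNumber ≠ j) : δ ≤ |f.translationNumber - j| := by
  rcases hj.lt_or_gt with hlt | hgt
  · have hg : ∀ x, g x < x + j := fun x => by
      by_contra! hx
      exact (g.le_translationNumber_of_add_int_le hx).not_gt (hτ ▸ hlt)
    have : f.translationNumber ≤ j - δ :=
      f.translationNumber_le_of_le_add fun x => by linarith [h x, hg x]
    rw [abs_sub_comm, abs_of_pos (sub_pos.2 hlt)]
    linarith
  · have hf : ∀ x, x + j < f x := fun x => by
      by_contra! hx
      exact (f.translationNumber_le_of_le_add_int hx).not_gt hgt
    have : j + δ ≤ g.translationNumber :=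
      g.le_translationNumber_of_add_le fun x => by linarith [h x, hf x]
    rw [abs_of_pos (sub_pos.2 hgt)]
    linarith

end CircleDeg1Lift

theorem stmt_0_general (f g : CircleDeg1Lift)
    (hfc : Continuous f) (hgc : Continuous g)
    (hlt : ∀ x : ℝ, f x < g x)
    (hno : ¬ ∃ (m : ℕ) (n : ℤ) (x₀ y₀ : ℝ), 1 ≤ m ∧
      (⇑f)^[m] x₀ = x₀ + (n : ℝ) ∧ (⇑g)^[m] y₀ = y₀ + (n : ℝ)) :
    f.translationNumber ≠ g.translationNumber := by
  intro heq
  obtain ⟨δ, hδ, hgap⟩ := CircleDeg1Lift.exists_pos_forall_add_le_of_forall_lt hfc hgc hlt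
  obtain ⟨N, hN⟩ := exists_nat_gt δ⁻¹
  have hN₀ : 0 < N := by exact_mod_cast (inv_pos.2 hδ).trans hN
  obtain ⟨k, hk, -, hdir⟩ := Real.exists_nat_abs_mul_sub_round_le f.translationNumber hN₀
  set j := round ((k : ℝ) * f.translationNumber)
  have hτ : (f ^ k).translationNumber = (g ^ k).translationNumber := by
    simp only [CircleDeg1Lift.translationNumber_pow, heq]
  have hτf : (f ^ k).translationNumber = k * f.translationNumber :=
    CircleDeg1Lift.translationNumber_pow f k
  by_cases hj : (f ^ k).translationNumber = j
  · have hfk : Continuous (f ^ k) := by rw [CircleDeg1Lift.coe_pow]; exact hfc.iterate k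
    have hgk : Continuous (g ^ k) := by rw [CircleDeg1Lift.coe_pow]; exact hgc.iterate k
    obtain ⟨x₀, hx₀⟩ := ((f ^ k).translationNumber_eq_int_iff hfk).1 hj
    obtain ⟨y₀, hy₀⟩ := ((g ^ k).translationNumber_eq_int_iff hgk).1 (hτ ▸ hj)
    rw [CircleDeg1Lift.coe_pow] at hx₀ hy₀
    exact hno ⟨k, j, x₀, y₀, hk, hx₀, hy₀⟩
  · have hδle := CircleDeg1Lift.le_abs_translationNumber_sub_int_of_forall_add_le
      (CircleDeg1Lift.pow_add_le_pow_of_forall_add_le hgap hδ.le hk.ne') hτ hj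
    have : 1 / ((N : ℝ) + 1) < δ := by
      rw [one_div, inv_lt_comm₀ (by positivity) hδ]; linarith
    rw [hτf] at hδle
    linarith

/-- Two lifts of orientation-preserving circle homeomorphisms with `f < g`
pointwise and without a common "rational rotation pair" `(m, n)` realized by
periodic-type points have different translation numbers. -/
theorem stmt_0 (f g : CircleDeg1Lift)
    (hfc : Continuous f) (hgc : Continuous g)
    (hfs : StrictMono f) (hgs : StrictMono g)
    (hfb : Function.Bijective f) (hgb : Function.Bijective g)
    (hlt : ∀ x : ℝ, f x < g x)
    (hno : ¬ ∃ (m : ℕ) (n : ℤ) (x₀ y₀ : ℝ), 1 ≤ m ∧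
      (⇑f)^[m] x₀ = x₀ + (n : ℝ) ∧ (⇑g)^[m] y₀ = y₀ + (n : ℝ)) :
    f.translationNumber ≠ g.translationNumber :=
  stmt_0_general f g hfc hgc hlt hno
end

section
/- Let δ ∈ (0,1/2) and ε > 0, and set S = [0,δ] ∪ [1−δ,1]. Let f : ℝ² → ℝ (written f(x,t)) be a C¹ function such that for all (x,t) ∈ ℝ × S: f(x+1, t) = f(x,t) + 1, ∂f/∂x(x,t) > 0, and ∂f/∂t(x,t) > ε; and such that ε < f(x,1−δ) − f(x,δ) for all x ∈ ℝ. Let η ∈ (0, δ/2) and let α : ℝ → ℝ be a C^∞ function with 0 ≤ α ≤ 1, α(t) = 1 for t ∈ [0,η] ∪ [1−η,1], α(t) = 0 for t ∈ [δ/2, 1−δ/2], α'(t) ≤ 0 for t ∈ [0,δ], and α'(t) ≥ 0 for t ∈ [1−δ,1]. Define h : ℝ × [0,1] → ℝ by h(x,t) = α(t)·f(x,t) + (1−α(t))·( (f(x,δ) + f(x,1−δ))/2 + ε·(t − 1/2) ) for t ∈ S, and h(x,t) = (f(x,δ) + f(x,1−δ))/2 + ε·(t − 1/2) for t ∈ [δ,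 1−δ]. Then: (i) h is C¹ on ℝ × [0,1]; (ii) h(x+1, t) = h(x,t) + 1 for all (x,t); (iii) ∂h/∂x(x,t) > 0 and ∂h/∂t(x,t) > 0 for all (x,t) ∈ ℝ × [0,1]; and consequently (iv) for each fixed t ∈ [0,1], the map x ↦ h(x,t) is a strictly increasing bijection of ℝ. -/
/-- The interpolated holonomy family `h` is a `C¹` family of strictly
increasing bijections of `ℝ` commuting with the unit translation, with
positive horizontal and vertical derivatives on the strip `ℝ × [0,1]`. -/
theorem stmt_5 (δ ε η : ℝ) (hδ : δ ∈ Set.Ioo (0:ℝ) (1/2)) (hε : 0 < ε)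
    (hη : η ∈ Set.Ioo (0:ℝ) (δ/2))
    (f : ℝ × ℝ → ℝ) (hf : ContDiff ℝ 1 f)
    (hper : ∀ x t : ℝ, t ∈ Set.Icc 0 δ ∪ Set.Icc (1-δ) 1 →
      f (x + 1, t) = f (x, t) + 1)
    (hfx : ∀ x t : ℝ, t ∈ Set.Icc 0 δ ∪ Set.Icc (1-δ) 1 →
      0 < deriv (fun s => f (s, t)) x)
    (hft : ∀ x t : ℝ, t ∈ Set.Icc 0 δ ∪ Set.Icc (1-δ) 1 →
      ε < deriv (fun s => f (x, s)) t)
    (hgap : ∀ x : ℝ, ε < f (x, 1-δ) - f (x, δ))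
    (α : ℝ → ℝ) (hα : ContDiff ℝ (⊤ : ℕ∞) α)
    (hα01 : ∀ t : ℝ, α t ∈ Set.Icc (0:ℝ) 1)
    (hα1 : ∀ t ∈ Set.Icc (0:ℝ) η ∪ Set.Icc (1-η) 1, α t = 1)
    (hα0 : ∀ t ∈ Set.Icc (δ/2) (1-δ/2), α t = 0)
    (hα'dec : ∀ t ∈ Set.Icc (0:ℝ) δ, deriv α t ≤ 0)
    (hα'inc : ∀ t ∈ Set.Icc (1-δ) (1:ℝ), 0 ≤ deriv α t)
    (h : ℝ × ℝ → ℝ)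
    (hdef1 : ∀ x t : ℝ, t ∈ Set.Icc 0 δ ∪ Set.Icc (1-δ) 1 →
      h (x, t) = α t * f (x, t) +
        (1 - α t) * ((f (x, δ) + f (x, 1-δ)) / 2 + ε * (t - 1/2)))
    (hdef2 : ∀ x t : ℝ, t ∈ Set.Icc δ (1-δ) →
      h (x, t) = (f (x, δ) + f (x, 1-δ)) / 2 + ε * (t - 1/2)) :
    ContDiffOn ℝ 1 h (Set.univ ×ˢ Set.Icc (0:ℝ) 1) ∧
    (∀ x t : ℝ, t ∈ Set.Icc (0:ℝ) 1 → h (x + 1, t) = h (x, t) + 1) ∧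
    (∀ x t : ℝ, t ∈ Set.Icc (0:ℝ) 1 →
      0 < deriv (fun s => h (s, t)) x ∧
      0 < derivWithin (fun s => h (x, s)) (Set.Icc (0:ℝ) 1) t) ∧
    (∀ t ∈ Set.Icc (0:ℝ) 1,
      StrictMono (fun x => h (x, t)) ∧ Function.Bijective (fun x => h (x, t))) := by
  obtain ⟨hδ0, hδ2⟩ := hδ
  obtain ⟨hη0, hη2⟩ := hη
  have hδ1 : δ < 1 - δ := by linarith
  set A : ℝ → ℝ := fun x => (f (x, δ) + f (x, 1-δ)) / 2 with hAdef
  set H : ℝ × ℝ → ℝ :=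
    fun p => α p.2 * f p + (1 - α p.2) * (A p.1 + ε * (p.2 - 1/2)) with hHdef
  have hδS : ∀ x : ℝ, (δ:ℝ) ∈ Set.Icc (0:ℝ) δ ∪ Set.Icc (1-δ) 1 := fun _ => Or.inl ⟨hδ0.le, le_refl δ⟩
  have h1δS : (1-δ:ℝ) ∈ Set.Icc (0:ℝ) δ ∪ Set.Icc (1-δ) 1 := Or.inr ⟨le_refl _, by linarith⟩
  have hα0' : ∀ t ∈ Set.Icc δ (1-δ), α t = 0 := fun t ht =>
    hα0 t ⟨by linarith [ht.1], by linarith [ht.2]⟩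
  -- h agrees with H on the strip
  have hH : ∀ x t : ℝ, t ∈ Set.Icc (0:ℝ) 1 → h (x, t) = H (x, t) := by
    intro x t ht
    rcases le_total t δ with h1 | h1
    · rw [hdef1 x t (Or.inl ⟨ht.1, h1⟩)]
    · rcases le_total (1-δ) t with h2 | h2
      · rw [hdef1 x t (Or.inr ⟨h2, ht.2⟩)]
      · rw [hdef2 x t ⟨h1, h2⟩]
        simp only [hHdef, hAdef, hα0' t ⟨h1, h2⟩]
        ring
  -- differentiability of slices of f
  have hf1 : Differentiable ℝ f := hf.differentiable one_ne_zero
  have hdiffx : ∀ (u x : ℝ), DifferentiableAt ℝ (fun s => f (s, u)) x := fun u x =>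
    (hf1 (x, u)).comp x (differentiableAt_id.prodMk (differentiableAt_const u))
  have hdiffy : ∀ (x t : ℝ), DifferentiableAt ℝ (fun s => f (x, s)) t := fun x t =>
    (hf1 (x, t)).comp t ((differentiableAt_const x).prodMk differentiableAt_id)
  -- horizontal derivative
  have hderivx : ∀ (x t : ℝ), t ∈ Set.Icc (0:ℝ) 1 →
      HasDerivAt (fun s => h (s, t))
        (α t * deriv (fun s => f (s, t)) x
          + (1 - α t) * ((deriv (fun s => f (s, δ)) x + deriv (fun s => f (s, 1-δ)) x) / 2)) x := by
    intro x t ht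
    have hfun : (fun s => h (s, t)) = fun s =>
        α t * f (s, t) + (1 - α t) * ((f (s, δ) + f (s, 1-δ)) / 2 + ε * (t - 1/2)) := by
      funext s; rw [hH s t ht]
    rw [hfun]
    have h1 := ((hdiffx t x).hasDerivAt).const_mul (α t)
    have h2 := (((((hdiffx δ x).hasDerivAt).add
      ((hdiffx (1-δ) x).hasDerivAt)).div_const 2).add_const (ε * (t - 1/2))).const_mul (1 - α t)
    exact h1.add h2
  have hposx : ∀ (x t : ℝ), t ∈ Set.Icc (0:ℝ) 1 →
      0 < α t * deriv (fun s => f (s, t)) x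
          + (1 - α t) * ((deriv (fun s => f (s, δ)) x + deriv (fun s => f (s, 1-δ)) x) / 2) := by
    intro x t ht
    have p1 := hfx x δ (hδS x)
    have p2 := hfx x (1-δ) h1δS
    obtain ⟨ha0, ha1⟩ := hα01 t
    have hS : t ∈ Set.Icc (0:ℝ) δ ∪ Set.Icc (1-δ) 1 ∨ α t = 0 := by
      rcases le_total t δ with h1 | h1
      · exact Or.inl (Or.inl ⟨ht.1, h1⟩)
      · rcases le_total (1-δ) t with h2 | h2
        · exact Or.inl (Or.inr ⟨h2, ht.2⟩)
        · exact Or.inr (hα0' t ⟨h1, h2⟩)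
    rcases hS with hS | hS
    · have p0 := hfx x t hS
      rcases eq_or_lt_of_le ha0 with he | hlt
      · rw [← he]; nlinarith
      · nlinarith [mul_pos hlt p0, mul_nonneg (by linarith : (0:ℝ) ≤ 1 - α t) (by linarith :
          (0:ℝ) ≤ (deriv (fun s => f (s, δ)) x + deriv (fun s => f (s, 1-δ)) x) / 2)]
    · rw [hS]; nlinarith
  -- vertical derivative
  have hderivy : ∀ (x t : ℝ),
      HasDerivAt (fun s => α s * f (x, s) + (1 - α s) * (A x + ε * (s - 1/2)))
        (deriv α t * f (x, t) + α t * deriv (fun s => f (x, s)) t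
          + (-(deriv α t) * (A x + ε * (t - 1/2)) + (1 - α t) * ε)) t := by
    intro x t
    have hαd : HasDerivAt α (deriv α t) t := (hα.differentiable (by simp) t).hasDerivAt
    have h1 := hαd.mul (hdiffy x t).hasDerivAt
    have hlin : HasDerivAt (fun s : ℝ => A x + ε * (s - 1/2)) ε t := by
      have h0 : HasDerivAt (fun s : ℝ => ε * (s - 1/2)) (ε * 1) t :=
        ((hasDerivAt_id t).sub_const (1/2)).const_mul ε
      simpa using h0.const_add (A x)
    have h2 := (hαd.const_sub 1).mul hlin
    exact h1.add h2
  -- monotonicity of f in t on the two bands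
  have hmonoL : ∀ x : ℝ, ∀ t ∈ Set.Icc (0:ℝ) δ, f (x, t) ≤ f (x, δ) := by
    intro x t ht
    have hm : MonotoneOn (fun s => f (x, s)) (Set.Icc 0 δ) := by
      apply monotoneOn_of_deriv_nonneg (convex_Icc 0 δ)
      · exact fun s _ => (hdiffy x s).continuousAt.continuousWithinAt
      · exact fun s _ => (hdiffy x s).differentiableWithinAt
      · intro s hs
        rw [interior_Icc] at hs
        exact le_of_lt (lt_trans hε (hft x s (Or.inl ⟨hs.1.le, hs.2.le⟩)))
    exact hm ht ⟨hδ0.le, le_refl δ⟩ ht.2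
  have hmonoR : ∀ x : ℝ, ∀ t ∈ Set.Icc (1-δ) (1:ℝ), f (x, 1-δ) ≤ f (x, t) := by
    intro x t ht
    have hm : MonotoneOn (fun s => f (x, s)) (Set.Icc (1-δ) 1) := by
      apply monotoneOn_of_deriv_nonneg (convex_Icc (1-δ) 1)
      · exact fun s _ => (hdiffy x s).continuousAt.continuousWithinAt
      · exact fun s _ => (hdiffy x s).differentiableWithinAt
      · intro s hs
        rw [interior_Icc] at hs
        exact le_of_lt (lt_trans hε (hft x s (Or.inr ⟨hs.1.le, hs.2.le⟩)))
    exact hm ⟨le_refl _, by linarith⟩ ht ht.1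
  have hposy : ∀ (x t : ℝ), t ∈ Set.Icc (0:ℝ) 1 →
      0 < deriv α t * f (x, t) + α t * deriv (fun s => f (x, s)) t
          + (-(deriv α t) * (A x + ε * (t - 1/2)) + (1 - α t) * ε) := by
    intro x t ht
    obtain ⟨ha0, ha1⟩ := hα01 t
    have hgapx := hgap x
    rcases le_total t δ with h1 | h1
    · have ha' : deriv α t ≤ 0 := hα'dec t ⟨ht.1, h1⟩
      have hk1 : f (x, t) ≤ f (x, δ) := hmonoL x t ⟨ht.1, h1⟩
      have key : f (x, t) < A x + ε * (t - 1/2) := by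
        simp only [hAdef]
        nlinarith [mul_nonneg hε.le ht.1]
      have hftt := hft x t (Or.inl ⟨ht.1, h1⟩)
      nlinarith [mul_nonneg (neg_nonneg.2 ha') (sub_nonneg.2 key.le),
        mul_nonneg ha0 (sub_nonneg.2 hftt.le)]
    · rcases le_total (1-δ) t with h2 | h2
      · have ha' : 0 ≤ deriv α t := hα'inc t ⟨h2, ht.2⟩
        have hk1 : f (x, 1-δ) ≤ f (x, t) := hmonoR x t ⟨h2, ht.2⟩
        have key : A x + ε * (t - 1/2) < f (x, t) := by
          simp only [hAdef]
          nlinarith [mul_nonneg hε.le (by linarith [ht.2] : (0:ℝ) ≤ 1 - t)]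
        have hftt := hft x t (Or.inr ⟨h2, ht.2⟩)
        nlinarith [mul_nonneg ha' (sub_nonneg.2 key.le),
          mul_nonneg ha0 (sub_nonneg.2 hftt.le)]
      · have hev : α =ᶠ[nhds t] fun _ => 0 := by
          filter_upwards [Ioo_mem_nhds (by linarith : δ/2 < t) (by linarith : t < 1 - δ/2)]
            with s hs
          exact hα0 s ⟨hs.1.le, hs.2.le⟩
        have hd0 : deriv α t = 0 := by
          rw [hev.deriv_eq]; simp
        rw [hd0, hα0' t ⟨h1, h2⟩]
        simpa using hε
  -- derivWithin computation
  have hdw : ∀ (x t : ℝ), t ∈ Set.Icc (0:ℝ) 1 →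
      derivWithin (fun s => h (x, s)) (Set.Icc (0:ℝ) 1) t
        = deriv α t * f (x, t) + α t * deriv (fun s => f (x, s)) t
          + (-(deriv α t) * (A x + ε * (t - 1/2)) + (1 - α t) * ε) := by
    intro x t ht
    have heq : Set.EqOn (fun s => h (x, s))
        (fun s => α s * f (x, s) + (1 - α s) * (A x + ε * (s - 1/2))) (Set.Icc (0:ℝ) 1) := by
      intro s hs
      show h (x, s) = _
      rw [hH x s hs]
    rw [derivWithin_congr heq (heq ht)]
    rw [(hderivy x t).differentiableAt.derivWithin
      ((uniqueDiffOn_Icc (by norm_num : (0:ℝ) < 1)) t ht)]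
    exact (hderivy x t).deriv
  -- C¹ smoothness
  have c1 : ContDiff ℝ 1 (fun p : ℝ × ℝ => f (p.1, δ)) := hf.comp (contDiff_fst.prodMk contDiff_const)
  have c2 : ContDiff ℝ 1 (fun p : ℝ × ℝ => f (p.1, 1-δ)) :=
    hf.comp (contDiff_fst.prodMk contDiff_const)
  have cα : ContDiff ℝ 1 (fun p : ℝ × ℝ => α p.2) := (hα.of_le (by simp)).comp contDiff_snd
  have Hcd : ContDiff ℝ 1 H := by
    apply ContDiff.add
    · exact cα.mul hf
    · exact (contDiff_const.sub cα).mul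
        (((c1.add c2).div_const 2).add (contDiff_const.mul (contDiff_snd.sub contDiff_const)))
  have part1 : ContDiffOn ℝ 1 h (Set.univ ×ˢ Set.Icc (0:ℝ) 1) := by
    apply Hcd.contDiffOn.congr
    intro p hp
    exact hH p.1 p.2 hp.2
  -- periodicity
  have part2 : ∀ x t : ℝ, t ∈ Set.Icc (0:ℝ) 1 → h (x + 1, t) = h (x, t) + 1 := by
    intro x t ht
    have pδ := hper x δ (hδS x)
    have p1δ := hper x (1-δ) h1δS
    rcases le_total t δ with h1 | h1
    · have hm : t ∈ Set.Icc (0:ℝ) δ ∪ Set.Icc (1-δ) 1 := Or.inl ⟨ht.1, h1⟩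
      rw [hdef1 _ _ hm, hdef1 _ _ hm, hper x t hm, pδ, p1δ]; ring
    · rcases le_total (1-δ) t with h2 | h2
      · have hm : t ∈ Set.Icc (0:ℝ) δ ∪ Set.Icc (1-δ) 1 := Or.inr ⟨h2, ht.2⟩
        rw [hdef1 _ _ hm, hdef1 _ _ hm, hper x t hm, pδ, p1δ]; ring
      · rw [hdef2 _ _ ⟨h1, h2⟩, hdef2 _ _ ⟨h1, h2⟩, pδ, p1δ]; ring
  refine ⟨part1, part2, fun x t ht => ⟨?_, ?_⟩, fun t ht => ?_⟩
  · rw [(hderivx x t ht).deriv]; exact hposx x t ht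
  · rw [hdw x t ht]; exact hposy x t ht
  · have hsm : StrictMono (fun x => h (x, t)) := by
      apply strictMono_of_deriv_pos
      intro x
      rw [(hderivx x t ht).deriv]; exact hposx x t ht
    have hcont : Continuous (fun x => h (x, t)) := by
      have heq : (fun x => h (x, t)) = fun x => H (x, t) := funext fun x => hH x t ht
      rw [heq]
      exact Hcd.continuous.comp (continuous_id.prodMk continuous_const)
    have hint : ∀ (n : ℤ) (x : ℝ), h (x + n, t) = h (x, t) + n := by
      intro n
      induction n using Int.induction_on with
      | zero => simp
      | succ n ih =>
        intro x
        push_cast at ih ⊢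
        have e1 : x + ((n:ℝ) + 1) = (x + (n:ℝ)) + 1 := by ring
        rw [e1, part2 _ t ht, ih x]
        ring
      | pred n ih =>
        intro x
        push_cast at ih ⊢
        have h3 := part2 (x + (-(n:ℝ) - 1)) t ht
        have e2 : x + (-(n:ℝ) - 1) + 1 = x + -(n:ℝ) := by ring
        rw [e2, ih x] at h3
        linarith
    have htop : Filter.Tendsto (fun x => h (x, t)) Filter.atTop Filter.atTop := by
      apply Filter.tendsto_atTop_mono (fun x => ?_)
        (Filter.tendsto_atTop_add_const_left _ (h (0, t))
          (Filter.tendsto_atTop_add_const_right _ (-1) Filter.tendsto_id))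
      have hb1 : h ((⌊x⌋ : ℝ), t) ≤ h (x, t) := hsm.monotone (Int.floor_le x)
      have hb2 : h ((0:ℝ) + (⌊x⌋ : ℝ), t) = h (0, t) + (⌊x⌋ : ℝ) := hint ⌊x⌋ 0
      rw [zero_add] at hb2
      have hb3 : x - 1 < (⌊x⌋ : ℝ) := Int.sub_one_lt_floor x
      simp only [id_eq]
      linarith
    have hbot : Filter.Tendsto (fun x => h (x, t)) Filter.atBot Filter.atBot := by
      apply Filter.tendsto_atBot_mono (fun x => ?_)
        (Filter.tendsto_atBot_add_const_left _ (h (0, t))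
          (Filter.tendsto_atBot_add_const_right _ 1 Filter.tendsto_id))
      have hb1 : h (x, t) ≤ h ((⌈x⌉ : ℝ), t) := hsm.monotone (Int.le_ceil x)
      have hb2 : h ((0:ℝ) + (⌈x⌉ : ℝ), t) = h (0, t) + (⌈x⌉ : ℝ) := hint ⌈x⌉ 0
      rw [zero_add] at hb2
      have hb3 : (⌈x⌉ : ℝ) < x + 1 := Int.ceil_lt_add_one x
      simp only [id_eq]
      linarith
    exact ⟨hsm, hsm.injective, hcont.surjective htop hbot⟩
end
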